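/- Let f be L-gradient Lipschitz satisfying the PL condition with parameter μ ∈ (0, L], and consider iterates x^t = x^{t−1} − η∇f(x^{t−1}) + ξ^t with ‖ξ^t‖ ≤ r and η ≤ 1/L. Then f(x^T) − f* ≤ (1 − ημ)^T·(f(x^0) − f*) + r²/(η²μ). -/

import Mathlib

/-!
Along the segment `t ↦ x + t • v` the gradient moves by at most `L t ‖v‖`, which gives the
descent lemma `f (x + v) ≤ f x + ⟪∇f x, v⟫ + L/2 ‖v‖²`. For a perturbed gradient step with
`L η ≤ 1`, completing the square turns this into
`f x⁺ ≤ f x - η/2 ‖∇f x‖² + ‖ξ‖²/(2η)`, and the PL inequality makes the gap `f - f*` contract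
by the factor `1 - ημ` up to an additive `r²/η`. Unrolling this affine recursion around its
fixed point `r²/(η²μ)` gives the bound.
-/

open InnerProductSpace

section GradientLipschitz

variable {E : Type*} [NormedAddCommGroup E] [InnerProductSpace ℝ E] [CompleteSpace E]
  {f : E → ℝ} {L : ℝ}

theorem hasDerivAt_comp_add_smul (hf : Differentiable ℝ f) (x v : E) (t : ℝ) :
    HasDerivAt (fun s : ℝ => f (x + s • v)) ⟪gradient f (x + t • v), v⟫_ℝ t := by
  have hline : HasDerivAt (fun s : ℝ => x + s • v) v t := by
    simpa using ((hasDerivAt_id t).smul_const v).const_add x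
  simpa [toDual_apply_apply, Function.comp_def] using
    (hf (x + t • v)).hasGradientAt.hasFDerivAt.comp_hasDerivAt t hline

theorem inner_gradient_sub_le (hlip : ∀ x y, ‖gradient f x - gradient f y‖ ≤ L * ‖x - y‖)
    (x v : E) {t : ℝ} (ht : 0 ≤ t) :
    ⟪gradient f (x + t • v) - gradient f x, v⟫_ℝ ≤ L * t * ‖v‖ ^ 2 :=
  calc ⟪gradient f (x + t • v) - gradient f x, v⟫_ℝ
      ≤ ‖gradient f (x + t • v) - gradient f x‖ * ‖v‖ := real_inner_le_norm _ _
    _ ≤ L * ‖t • v‖ * ‖v‖ := by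
        gcongr
        simpa using hlip (x + t • v) x
    _ = L * t * ‖v‖ ^ 2 := by rw [norm_smul, Real.norm_of_nonneg ht]; ring

theorem descent_lemma (hf : Differentiable ℝ f)
    (hlip : ∀ x y, ‖gradient f x - gradient f y‖ ≤ L * ‖x - y‖) (x v : E) :
    f (x + v) ≤ f x + ⟪gradient f x, v⟫_ℝ + L / 2 * ‖v‖ ^ 2 := by
  set φ : ℝ → ℝ := fun t => f (x + t • v) - t * ⟪gradient f x, v⟫_ℝ - L / 2 * t ^ 2 * ‖v‖ ^ 2
  have hφ : ∀ t,
      HasDerivAt φ (⟪gradient f (x + t • v) - gradient f x, v⟫_ℝ - L * t * ‖v‖ ^ 2) t := by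
    intro t
    refine (((hasDerivAt_comp_add_smul hf x v t).sub ((hasDerivAt_id t).mul_const
      ⟪gradient f x, v⟫_ℝ)).sub (((hasDerivAt_pow 2 t).const_mul (L / 2)).mul_const
        (‖v‖ ^ 2))).congr_deriv ?_
    rw [inner_sub_left]
    simp only [Nat.cast_ofNat]
    ring
  have hφ_anti : AntitoneOn φ (Set.Ici 0) := by
    refine antitoneOn_of_hasDerivWithinAt_nonpos (convex_Ici 0)
      (fun t _ => (hφ t).continuousAt.continuousWithinAt) (fun t _ => (hφ t).hasDerivWithinAt) ?_
    intro t ht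
    rw [interior_Ici] at ht
    exact sub_nonpos.2 (inner_gradient_sub_le hlip x v (le_of_lt ht))
  have := hφ_anti (Set.mem_Ici.2 le_rfl) (Set.mem_Ici.2 zero_le_one) zero_le_one
  norm_num only [φ, zero_smul, add_zero, one_smul, zero_mul, one_mul, sub_zero, one_pow,
    mul_zero] at this
  linarith

variable {η : ℝ}

theorem perturbed_gradient_step_le (hf : Differentiable ℝ f)
    (hlip : ∀ x y, ‖gradient f x - gradient f y‖ ≤ L * ‖x - y‖) (hη : 0 < η) (hLη : L * η ≤ 1)
    (p ξ : E) :
    f (p - η • gradient f p + ξ) ≤ f p - η / 2 * ‖gradient f p‖ ^ 2 + ‖ξ‖ ^ 2 / (2 * η) := by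
  set g := gradient f p
  set v := ξ - η • g
  have hdesc : f (p - η • g + ξ) ≤ f p + ⟪g, v⟫_ℝ + L / 2 * ‖v‖ ^ 2 := by
    rw [show p - η • g + ξ = p + v by simp only [v]; abel]
    exact descent_lemma hf hlip p v
  have hLv : L / 2 * ‖v‖ ^ 2 ≤ ‖v‖ ^ 2 / (2 * η) := by
    rw [le_div_iff₀ (by positivity)]
    nlinarith [sq_nonneg ‖v‖]
  -- completing the square, since `v + η • g = ξ`
  have hsq : ⟪g, v⟫_ℝ + ‖v‖ ^ 2 / (2 * η) = ‖ξ‖ ^ 2 / (2 * η) - η / 2 * ‖g‖ ^ 2 := by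
    have hξ : ξ = v + η • g := by simp [v]
    rw [hξ, norm_add_sq_real, real_inner_smul_right, norm_smul, Real.norm_of_nonneg hη.le,
      real_inner_comm]
    field_simp
    ring
  linarith

theorem perturbed_gradient_step_sub_le {μ fstar : ℝ} (hf : Differentiable ℝ f)
    (hlip : ∀ x y, ‖gradient f x - gradient f y‖ ≤ L * ‖x - y‖)
    (hPL : ∀ x, 2 * μ * (f x - fstar) ≤ ‖gradient f x‖ ^ 2) (hη : 0 < η) (hLη : L * η ≤ 1)
    (p ξ : E) :
    f (p - η • gradient f p + ξ) - fstar ≤ (1 - η * μ) * (f p - fstar) + ‖ξ‖ ^ 2 / (2 * η) := by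
  have := perturbed_gradient_step_le hf hlip hη hLη p ξ
  nlinarith [hPL p]

end GradientLipschitz

theorem PL_linear_convergence_general {d : ℕ} (f : EuclideanSpace ℝ (Fin d) → ℝ)
    (L μ η r fstar : ℝ) (T : ℕ)
    (hdiff : Differentiable ℝ f)
    (hlip : ∀ x y, ‖gradient f x - gradient f y‖ ≤ L * ‖x - y‖)
    (hμ : 0 < μ) (hμL : μ ≤ L)
    (hPL : ∀ x, 2 * μ * (f x - fstar) ≤ ‖gradient f x‖ ^ 2)
    (hη : 0 < η) (hηL : η ≤ 1 / L)
    (x ξ : ℕ → EuclideanSpace ℝ (Fin d))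
    (hξ : ∀ t, ‖ξ t‖ ≤ r)
    (hrec : ∀ t, 1 ≤ t → t ≤ T →
      x t = x (t - 1) - η • gradient f (x (t - 1)) + ξ t) :
    f (x T) - fstar ≤ (1 - η * μ) ^ T * (f (x 0) - fstar) + r ^ 2 / (η ^ 2 * μ) := by
  have hL : 0 < L := one_div_pos.1 (hη.trans_le hηL)
  have hLη : L * η ≤ 1 := (le_div_iff₀' hL).1 hηL
  have hημ : 0 ≤ 1 - η * μ := by nlinarith
  set c := r ^ 2 / (η ^ 2 * μ)
  -- `c` is the fixed point of `e ↦ (1 - η μ) e + r² / η`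
  have hc : η * μ * c = r ^ 2 / η := by
    simp only [c]
    field_simp
  have hcontract : ∀ t < T, f (x (t + 1)) - fstar - c ≤ (1 - η * μ) * (f (x t) - fstar - c) := by
    intro t ht
    rw [hrec (t + 1) (by omega) ht, Nat.add_sub_cancel]
    have hξr : ‖ξ (t + 1)‖ ^ 2 / (2 * η) ≤ r ^ 2 / η := by
      rw [div_le_div_iff₀ (by positivity) hη]
      nlinarith [pow_le_pow_left₀ (norm_nonneg _) (hξ (t + 1)) 2, sq_nonneg r]
    linarith [perturbed_gradient_step_sub_le hdiff hlip hPL hη hLη (x t) (ξ (t + 1))]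
  have hgeom := le_geom (u := fun t => f (x t) - fstar - c) hημ T hcontract
  have hc_nonneg : 0 ≤ (1 - η * μ) ^ T * c := by positivity
  linarith

theorem PL_linear_convergence {d : ℕ} (f : EuclideanSpace ℝ (Fin d) → ℝ)
    (L μ η r fstar : ℝ) (T : ℕ)
    (hdiff : Differentiable ℝ f)
    (hlip : ∀ x y, ‖gradient f x - gradient f y‖ ≤ L * ‖x - y‖)
    (hL : 0 < L) (hμ : 0 < μ) (hμL : μ ≤ L)
    (hfstar : ∀ x, fstar ≤ f x)
    (hPL : ∀ x, 2 * μ * (f x - fstar) ≤ ‖gradient f x‖ ^ 2)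
    (hη : 0 < η) (hηL : η ≤ 1 / L)
    (x ξ : ℕ → EuclideanSpace ℝ (Fin d))
    (hξ : ∀ t, ‖ξ t‖ ≤ r)
    (hrec : ∀ t, 1 ≤ t → t ≤ T →
      x t = x (t - 1) - η • gradient f (x (t - 1)) + ξ t) :
    f (x T) - fstar ≤ (1 - η * μ) ^ T * (f (x 0) - fstar) + r ^ 2 / (η ^ 2 * μ) :=
  PL_linear_convergence_general f L μ η r fstar T hdiff hlip hμ hμL hPL hη hηL x ξ hξ hrec
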